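/- The greedy peeling algorithm, which repeatedly removes from the current set a slice of minimum slice sum and outputs the intermediate set of maximum density, returns a subset whose density is at least ρ_opt / N. -/

import Mathlib

open Finset

variable {α β : Type*}

noncomputable def mass [DecidableEq α] (E : Finset β) (w : β → ℝ)
    (slices : β → Finset α) (S : Finset α) : ℝ :=
  ∑ e ∈ E.filter (fun e => slices e ⊆ S), w e

noncomputable def sliceSum [DecidableEq α] (E : Finset β) (w : β → ℝ)
    (slices : β → Finset α) (S : Finset α) (q : α) : ℝ :=
  ∑ e ∈ E.filter (fun e => slices e ⊆ S ∧ q ∈ slices e), w e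

noncomputable def density [DecidableEq α] (E : Finset β) (w : β → ℝ)
    (slices : β → Finset α) (S : Finset α) : ℝ :=
  mass E w slices S / S.card

def suffixSet [DecidableEq α] {m : ℕ} (π : Fin m → α) (j : Fin m) : Finset α :=
  (Finset.univ.filter (fun i => j ≤ i)).image π

def IsDOrdering [DecidableEq α] (E : Finset β) (w : β → ℝ)
    (slices : β → Finset α) {m : ℕ} (π : Fin m → α) : Prop :=
  ∀ j : Fin m, ∀ r ∈ suffixSet π j,
    sliceSum E w slices (suffixSet π j) (π j) ≤ sliceSum E w slices (suffixSet π j) r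

noncomputable def rhoOpt [DecidableEq α] (Q : Finset α) (E : Finset β) (w : β → ℝ)
    (slices : β → Finset α) : ℝ :=
  sSup {x | ∃ S, S ⊆ Q ∧ S.Nonempty ∧ x = density E w slices S}

noncomputable def dpi [DecidableEq α] (E : Finset β) (w : β → ℝ)
    (slices : β → Finset α) {m : ℕ} (π : Fin m → α) (i : Fin m) : ℝ :=
  sliceSum E w slices (suffixSet π i) (π i)

noncomputable def cpi [DecidableEq α] (E : Finset β) (w : β → ℝ)
    (slices : β → Finset α) {m : ℕ} (π : Fin m → α) (i : Fin m) : ℝ :=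
  (Finset.univ.filter (fun i' : Fin m => i' ≤ i)).sup' ⟨i, by simp⟩ (dpi E w slices π)

/-!
Let `S` be a densest subset. Deleting `q ∈ S` loses exactly `d(S, q)` of mass and cannot
raise the density, so every slice sum in `S` is at least `ρ_opt`. Let `q_j` be the first element
of `S` in the peeling order; then `S ⊆ Q_j`, so `d(Q_j, q_j) ≥ d(S, q_j) ≥ ρ_opt`, and since
`q_j` minimises the slice sum in `Q_j`, every slice sum in `Q_j` is at least `ρ_opt`. Each entry
inside `Q_j` is counted in exactly `N` slice sums, so `N · M(Q_j) ≥ |Q_j| · ρ_opt`.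
-/

section Mass

variable [DecidableEq α] {E : Finset β} {w : β → ℝ} {slices : β → Finset α}

lemma mass_empty (h : ∀ e ∈ E, (slices e).Nonempty) : mass E w slices ∅ = 0 := by
  refine sum_eq_zero fun e he => ?_
  rw [mem_filter, subset_empty] at he
  exact absurd he.2 (h e he.1).ne_empty

lemma mass_eq_mass_erase_add_sliceSum (S : Finset α) (q : α) :
    mass E w slices S = mass E w slices (S.erase q) + sliceSum E w slices S q := by
  unfold mass sliceSum
  rw [← sum_filter_add_sum_filter_not (E.filter (fun e => slices e ⊆ S)) (fun e => q ∈ slices e),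
    filter_filter, filter_filter, add_comm]
  congr 1
  refine sum_congr (filter_congr fun e _ => ?_) fun _ _ => rfl
  simp [subset_erase]

lemma sliceSum_le_sliceSum (hw : ∀ e, 0 ≤ w e) {S T : Finset α} (hST : S ⊆ T) (q : α) :
    sliceSum E w slices S q ≤ sliceSum E w slices T q :=
  sum_le_sum_of_subset_of_nonneg (monotone_filter_right _ fun _ _ h => ⟨h.1.trans hST, h.2⟩)
    fun e _ _ => hw e

lemma sum_sliceSum {N : ℕ} (hcard : ∀ e ∈ E, (slices e).card = N) (S : Finset α) :
    ∑ q ∈ S, sliceSum E w slices S q = N * mass E w slices S := by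
  have hslice (q : α) : sliceSum E w slices S q =
      ∑ e ∈ E.filter (slices · ⊆ S), if q ∈ slices e then w e else 0 := by
    rw [sliceSum, ← filter_filter, sum_filter]
  rw [sum_congr rfl fun q _ => hslice q, sum_comm, mass, mul_sum]
  refine sum_congr rfl fun e he => ?_
  rw [mem_filter] at he
  rw [sum_ite_mem, inter_eq_right.mpr he.2, sum_const, nsmul_eq_mul, hcard e he.1]

lemma le_sliceSum_of_mass_erase_le {S : Finset α} {q : α} (hq : q ∈ S) {ρ : ℝ}
    (hS : mass E w slices S = ρ * S.card)
    (herase : mass E w slices (S.erase q) ≤ ρ * (S.erase q).card) :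
    ρ ≤ sliceSum E w slices S q := by
  have hcard : ((S.erase q).card : ℝ) + 1 = S.card := by exact_mod_cast card_erase_add_one hq
  have := mass_eq_mass_erase_add_sliceSum (E := E) (w := w) (slices := slices) S q
  rw [← hcard] at hS
  linarith

lemma mass_le_mul_card_of_density_le {Q : Finset α} {ρ : ℝ} (hempty : mass E w slices ∅ = 0)
    (hρ : ∀ S ⊆ Q, S.Nonempty → density E w slices S ≤ ρ) {T : Finset α} (hT : T ⊆ Q) :
    mass E w slices T ≤ ρ * T.card := by
  rcases T.eq_empty_or_nonempty with rfl | hTne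
  · simp [hempty]
  · exact (div_le_iff₀ (by exact_mod_cast hTne.card_pos)).mp (hρ T hT hTne)

lemma le_sliceSum_of_density_eq_max {Q S : Finset α} {ρ : ℝ} (hempty : mass E w slices ∅ = 0)
    (hSQ : S ⊆ Q) (hS : S.Nonempty) (hSρ : density E w slices S = ρ)
    (hρ : ∀ T ⊆ Q, T.Nonempty → density E w slices T ≤ ρ) {q : α} (hq : q ∈ S) :
    ρ ≤ sliceSum E w slices S q := by
  have hmass : mass E w slices S = ρ * S.card :=
    (div_eq_iff (by exact_mod_cast hS.card_pos.ne')).mp hSρ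
  exact le_sliceSum_of_mass_erase_le hq hmass
    (mass_le_mul_card_of_density_le hempty hρ ((erase_subset q S).trans hSQ))

lemma div_le_density_of_le_sliceSum {N : ℕ} (hN : 0 < N) (hcard : ∀ e ∈ E, (slices e).card = N)
    {S : Finset α} (hS : S.Nonempty) {ρ : ℝ} (h : ∀ q ∈ S, ρ ≤ sliceSum E w slices S q) :
    ρ / N ≤ density E w slices S := by
  have hsum : S.card * ρ ≤ N * mass E w slices S :=
    calc (S.card : ℝ) * ρ = ∑ _q ∈ S, ρ := by rw [sum_const, nsmul_eq_mul]
      _ ≤ ∑ q ∈ S, sliceSum E w slices S q := sum_le_sum h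
      _ = N * mass E w slices S := sum_sliceSum hcard S
  rw [density, div_le_div_iff₀ (by exact_mod_cast hN) (by exact_mod_cast hS.card_pos)]
  linarith

end Mass

lemma exists_mem_subset_suffixSet [DecidableEq α] {m : ℕ} (π : Fin m → α) {S : Finset α}
    (hS : S.Nonempty) (hSπ : S ⊆ univ.image π) : ∃ j, π j ∈ S ∧ S ⊆ suffixSet π j := by
  have hI : (univ.filter fun i => π i ∈ S).Nonempty := by
    obtain ⟨q, hq⟩ := hS
    obtain ⟨i, -, rfl⟩ := mem_image.mp (hSπ hq)
    exact ⟨i, mem_filter.mpr ⟨mem_univ _, hq⟩⟩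
  refine ⟨_, (mem_filter.mp (min'_mem _ hI)).2, fun q hq => ?_⟩
  obtain ⟨i, -, rfl⟩ := mem_image.mp (hSπ hq)
  exact mem_image.mpr ⟨i, mem_filter.mpr ⟨mem_univ _, min'_le _ i (by simpa using hq)⟩, rfl⟩

theorem greedy_peeling_guarantee_general [DecidableEq α] (Q : Finset α) (E : Finset β) (w : β → ℝ)
    (slices : β → Finset α) (N : ℕ) (hN : 1 ≤ N) (hw : ∀ e, 0 ≤ w e)
    (hcard : ∀ e ∈ E, (slices e).card = N)
    {m : ℕ} (π : Fin m → α)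
    (himg : Finset.univ.image π = Q)
    (hD : IsDOrdering E w slices π)
    (ρopt : ℝ)
    (hopt₁ : ∃ S, S ⊆ Q ∧ S.Nonempty ∧ density E w slices S = ρopt)
    (hopt₂ : ∀ S ⊆ Q, S.Nonempty → density E w slices S ≤ ρopt)
    (jbest : Fin m)
    (hbest : ∀ j : Fin m, density E w slices (suffixSet π j) ≤ density E w slices (suffixSet π jbest)) :
    ρopt / N ≤ density E w slices (suffixSet π jbest) := by
  obtain ⟨S, hSQ, hS, hSρ⟩ := hopt₁
  have hempty : mass E w slices ∅ = 0 := mass_empty fun e he => card_pos.mp (hcard e he ▸ hN)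
  obtain ⟨j, hjS, hSj⟩ := exists_mem_subset_suffixSet π hS (himg ▸ hSQ)
  have hρj : ρopt ≤ sliceSum E w slices (suffixSet π j) (π j) :=
    (le_sliceSum_of_density_eq_max hempty hSQ hS hSρ hopt₂ hjS).trans
      (sliceSum_le_sliceSum hw hSj _)
  calc ρopt / N ≤ density E w slices (suffixSet π j) :=
        div_le_density_of_le_sliceSum hN hcard ⟨_, hSj hjS⟩ fun r hr => hρj.trans (hD j r hr)
    _ ≤ density E w slices (suffixSet π jbest) := hbest j

theorem greedy_peeling_guarantee [DecidableEq α] (Q : Finset α) (E : Finset β) (w : β → ℝ)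
    (slices : β → Finset α) (N : ℕ) (hN : 1 ≤ N) (hw : ∀ e, 0 ≤ w e)
    (hcard : ∀ e ∈ E, (slices e).card = N) (hQ : Q.Nonempty)
    {m : ℕ} (hm : m = Q.card) (π : Fin m → α)
    (hinj : Function.Injective π) (himg : Finset.univ.image π = Q)
    (hD : IsDOrdering E w slices π)
    (ρopt : ℝ)
    (hopt₁ : ∃ S, S ⊆ Q ∧ S.Nonempty ∧ density E w slices S = ρopt)
    (hopt₂ : ∀ S ⊆ Q, S.Nonempty → density E w slices S ≤ ρopt)
    (jbest : Fin m)
    (hbest : ∀ j : Fin m, density E w slices (suffixSet π j) ≤ density E w slices (suffixSet π jbest)) :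
    ρopt / N ≤ density E w slices (suffixSet π jbest) :=
  greedy_peeling_guarantee_general Q E w slices N hN hw hcard π himg hD ρopt hopt₁ hopt₂ jbest hbest
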